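/- Let k be a field and n ≥ 1 an integer. There exists a normal subgroup N of SAut_k(A^n) that contains all translations but does not contain SL_n(k) (embedded as linear automorphisms) if and only if |k| = 2 and n = 2. -/

import Mathlib

open MvPolynomial

/-- Endomorphisms of affine `n`-space over `R`: `n`-tuples of polynomials in
`R[x_1,…,x_n]`, with composition given by substitution. -/
def PolyEnd (R : Type*) [CommRing R] (n : ℕ) : Type _ := Fin n → MvPolynomial (Fin n) R

namespace PolyEnd

variable {R S : Type*} [CommRing R] [CommRing S] {n : ℕ}

noncomputable instance : Monoid (PolyEnd R n) where
  one := fun i => X i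
  mul f g := fun i => bind₁ g (f i)
  mul_assoc f g h := funext fun i => by
    show bind₁ h (bind₁ g (f i)) = bind₁ (fun j => bind₁ h (g j)) (f i)
    exact bind₁_bind₁ g h (f i)
  one_mul f := funext fun i => by
    show bind₁ f (X i) = f i
    exact bind₁_X_right f i
  mul_one f := funext fun i => by
    show bind₁ X (f i) = f i
    rw [bind₁_X_left, AlgHom.id_apply]

@[simp] lemma mul_apply (f g : PolyEnd R n) (i : Fin n) :
    (f * g) i = bind₁ g (f i) := rfl

@[simp] lemma one_apply (i : Fin n) : (1 : PolyEnd R n) i = X i := rfl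

/-- The Jacobian determinant of an endomorphism. -/
noncomputable def jac (f : PolyEnd R n) : MvPolynomial (Fin n) R :=
  (Matrix.of fun i j => pderiv j (f i)).det

/-- The chain rule for partial derivatives of a substitution. -/
lemma pderiv_bind₁ (g : Fin n → MvPolynomial (Fin n) R)
    (p : MvPolynomial (Fin n) R) (j : Fin n) :
    pderiv j (bind₁ g p) = ∑ i, bind₁ g (pderiv i p) * pderiv j (g i) := by
  induction p using MvPolynomial.induction_on with
  | C a => simp
  | add p q hp hq => simp [hp, hq, Finset.sum_add_distrib, add_mul]
  | mul_X p i hp =>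
      rw [map_mul, bind₁_X_right, pderiv_mul, hp]
      have key : ∀ l : Fin n, bind₁ g (pderiv l (p * X i)) * pderiv j (g l)
          = bind₁ g (pderiv l p) * pderiv j (g l) * g i
            + (if l = i then bind₁ g p * pderiv j (g i) else 0) := by
        intro l
        rw [pderiv_mul, pderiv_X]
        by_cases h : l = i
        · subst h
          simp only [Pi.single_apply, if_pos rfl, map_add, map_mul, bind₁_X_right,
            bind₁_C_right, if_pos rfl]
          ring_nf
          simp [mul_comm, mul_left_comm, mul_assoc]
        · simp only [Pi.single_apply, if_neg (Ne.symm h), if_neg h, mul_zero, map_mul,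
            map_add, map_zero, add_zero, bind₁_X_right]
          ring
      rw [Finset.sum_congr rfl fun l _ => key l, Finset.sum_add_distrib]
      simp [Finset.sum_mul]

lemma jac_one : jac (1 : PolyEnd R n) = 1 := by
  unfold jac
  have : (Matrix.of fun i j => pderiv j ((1 : PolyEnd R n) i))
      = (1 : Matrix (Fin n) (Fin n) (MvPolynomial (Fin n) R)) := by
    ext i j
    simp [Matrix.one_apply, pderiv_X, Pi.single_apply, eq_comm]
  rw [this, Matrix.det_one]

/-- The chain rule for Jacobians. -/
lemma jac_mul (f g : PolyEnd R n) : jac (f * g) = bind₁ g (jac f) * jac g := by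
  unfold jac
  have : (Matrix.of fun i j => pderiv j ((f * g) i))
      = (Matrix.of fun i l => pderiv l (f i)).map (bind₁ g)
        * (Matrix.of fun l j => pderiv j (g l)) := by
    refine Matrix.ext fun i j => ?_
    exact pderiv_bind₁ g (f i) j
  rw [this, Matrix.det_mul]
  congr 1
  exact ((bind₁ g).map_det (Matrix.of fun i l => pderiv l (f i))).symm

end PolyEnd

/-- Automorphisms of affine `n`-space over `R` : endomorphisms admitting a two-sided
compositional inverse. -/
abbrev PolyAut (R : Type*) [CommRing R] (n : ℕ) := (PolyEnd R n)ˣ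

namespace PolyAut

variable {R S : Type*} [CommRing R] [CommRing S] {n : ℕ}

lemma bind₁_val_injective (f : PolyAut R n) :
    Function.Injective (bind₁ (σ := Fin n) (f.val : Fin n → MvPolynomial (Fin n) R)) := by
  intro p q h
  have hinv : ∀ r : MvPolynomial (Fin n) R, bind₁ (f.inv : Fin n → _) (bind₁ (f.val : Fin n → _) r) = r := by
    intro r
    refine (bind₁_bind₁ _ _ r).trans ?_
    have : (fun i => bind₁ (f.inv : Fin n → _) ((f.val : Fin n → _) i)) = (f.val * f.inv : PolyEnd R n) := rfl
    rw [this, f.val_inv]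
    show bind₁ (fun i => X i) r = r
    rw [show (fun i : Fin n => (X i : MvPolynomial (Fin n) R)) = X from rfl,
      bind₁_X_left, AlgHom.id_apply]
  calc p = bind₁ (f.inv : Fin n → _) (bind₁ (f.val : Fin n → _) p) := (hinv p).symm
    _ = bind₁ (f.inv : Fin n → _) (bind₁ (f.val : Fin n → _) q) := by rw [h]
    _ = q := hinv q

end PolyAut

/-- The subgroup of automorphisms of Jacobian `1`. -/
noncomputable def SAutGrp (R : Type*) [CommRing R] (n : ℕ) : Subgroup (PolyAut R n) where
  carrier := {f | PolyEnd.jac f.val = 1}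
  one_mem' := PolyEnd.jac_one
  mul_mem' := by
    intro f g hf hg
    show PolyEnd.jac (f.val * g.val) = 1
    rw [PolyEnd.jac_mul, hf, hg, map_one, one_mul]
  inv_mem' := by
    intro f hf
    show PolyEnd.jac f.inv = 1
    apply PolyAut.bind₁_val_injective f
    have h1 : PolyEnd.jac (f.inv * f.val) = 1 := by
      rw [f.inv_val]; exact PolyEnd.jac_one
    rw [PolyEnd.jac_mul, hf, mul_one] at h1
    rw [map_one]
    exact h1

lemma mem_SAutGrp_iff {R : Type*} [CommRing R] {n : ℕ} (f : PolyAut R n) :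
    f ∈ SAutGrp R n ↔ PolyEnd.jac f.val = 1 := Iff.rfl

section Translations

variable {R : Type*} [CommRing R] {n : ℕ}

/-- The translation endomorphism `(x_1 + c_1, …, x_n + c_n)`. -/
noncomputable def translEnd (c : Fin n → R) : PolyEnd R n := fun i => X i + C (c i)

lemma translEnd_mul (c d : Fin n → R) :
    translEnd c * translEnd d = translEnd (c + d) := by
  funext i
  show bind₁ (translEnd d) (translEnd c i) = translEnd (c + d) i
  simp only [translEnd, map_add, bind₁_C_right]
  rw [show bind₁ (translEnd d) (X i) = translEnd d i from bind₁_X_right _ i]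
  rw [show bind₁ (translEnd d) (C (c i)) = C (c i) from bind₁_C_right _ _]
  show X i + C (d i) + C (c i) = X i + C (c i + d i)
  rw [map_add]; ring

lemma translEnd_zero : translEnd (0 : Fin n → R) = 1 := by
  funext i
  show X i + C 0 = X i
  simp

/-- The translation automorphism `(x_1 + c_1, …, x_n + c_n)`. -/
noncomputable def transl (c : Fin n → R) : PolyAut R n where
  val := translEnd c
  inv := translEnd (-c)
  val_inv := by rw [translEnd_mul, add_neg_cancel, translEnd_zero]
  inv_val := by rw [translEnd_mul, neg_add_cancel, translEnd_zero]

@[simp] lemma transl_val (c : Fin n → R) : (transl c).val = translEnd c := rfl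

lemma jac_translEnd (c : Fin n → R) : PolyEnd.jac (translEnd c) = 1 := by
  unfold PolyEnd.jac
  have : (Matrix.of fun i j => pderiv j (translEnd c i))
      = (1 : Matrix (Fin n) (Fin n) (MvPolynomial (Fin n) R)) := by
    ext i j
    simp [translEnd, Matrix.one_apply, pderiv_X, Pi.single_apply, eq_comm]
  rw [this, Matrix.det_one]

lemma transl_mem_SAutGrp (c : Fin n → R) : transl c ∈ SAutGrp R n := jac_translEnd c

/-- The translation as element of `SAut`. -/
noncomputable def translS (c : Fin n → R) : ↥(SAutGrp R n) := ⟨transl c, transl_mem_SAutGrp c⟩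

/-- `f` is a translation. -/
def IsTranslation (f : PolyAut R n) : Prop := ∃ c : Fin n → R, f = transl c

end Translations

section Linear

variable {R : Type*} [CommRing R] {n : ℕ}

/-- The linear endomorphism associated with a matrix. -/
noncomputable def linEnd (M : Matrix (Fin n) (Fin n) R) : PolyEnd R n :=
  fun i => ∑ j, C (M i j) * X j

/-- `f` is a linear automorphism (i.e. in the image of `GL_n`). -/
def IsLinear (f : PolyAut R n) : Prop := ∃ M : Matrix (Fin n) (Fin n) R, f.val = linEnd M

/-- `f` is a linear automorphism given by a matrix of determinant 1
(i.e. in the image of `SL_n`). -/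
def MemSL (f : PolyAut R n) : Prop :=
  ∃ M : Matrix (Fin n) (Fin n) R, M.det = 1 ∧ f.val = linEnd M

/-- `f` is a triangular automorphism. -/
def IsTriangular (f : PolyAut R n) : Prop :=
  ∃ (a : Fin n → Rˣ) (b : Fin n → MvPolynomial (Fin n) R),
    (∀ i : Fin n, b i ∈ MvPolynomial.supported R {j : Fin n | (j : ℕ) < (i : ℕ)}) ∧
    ∀ i : Fin n, f.val i = C ((a i : R)) * X i + b i

/-- The tame subgroup, generated by linear and triangular automorphisms. -/
noncomputable def TameGrp (R : Type*) [CommRing R] (n : ℕ) : Subgroup (PolyAut R n) :=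
  Subgroup.closure {f | IsLinear f ∨ IsTriangular f}

end Linear

section Map

variable {R S : Type*} [CommRing R] [CommRing S] {n : ℕ}

/-- Applying a ring homomorphism to all coefficients, as a monoid homomorphism of
endomorphisms of affine `n`-space. -/
noncomputable def endMapHom (φ : R →+* S) : PolyEnd R n →* PolyEnd S n where
  toFun f := fun i => MvPolynomial.map φ (f i)
  map_one' := funext fun i => by
    show MvPolynomial.map φ (X i) = X i
    simp
  map_mul' f g := funext fun i => by
    show MvPolynomial.map φ (bind₁ g (f i)) = bind₁ (fun j => MvPolynomial.map φ (g j)) (MvPolynomial.map φ (f i))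
    exact map_bind₁ _ _ _

/-- Applying a ring homomorphism to all coefficients, on automorphisms. -/
noncomputable def autMap (φ : R →+* S) : PolyAut R n →* PolyAut S n :=
  Units.map (endMapHom φ)

lemma jac_endMapHom (φ : R →+* S) (f : PolyEnd R n) :
    PolyEnd.jac (endMapHom φ f) = MvPolynomial.map φ (PolyEnd.jac f) := by
  unfold PolyEnd.jac
  have : (Matrix.of fun i j => pderiv j ((endMapHom φ f) i))
      = (Matrix.of fun i j => pderiv j (f i)).map (MvPolynomial.map φ) :=
    Matrix.ext fun i j => by
      exact pderiv_map (φ := φ) (f := f i) (i := j)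
  rw [this, RingHom.map_det]
  rfl

/-- Specialisation of an automorphism over `R[t]` at a value `t₀ ∈ R`. -/
noncomputable def specAut (t0 : R) : PolyAut (Polynomial R) n →* PolyAut R n :=
  autMap (Polynomial.evalRingHom t0)

lemma specAut_mem_SAutGrp (h : PolyAut (Polynomial R) n)
    (hh : h ∈ SAutGrp (Polynomial R) n) (t0 : R) :
    specAut t0 h ∈ SAutGrp R n := by
  show PolyEnd.jac ((specAut t0 h).val) = 1
  have : (specAut t0 h).val = endMapHom (Polynomial.evalRingHom t0) h.val := rfl
  rw [this, jac_endMapHom, hh, map_one]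

/-- Specialisation, from `SAut` over `R[t]` to `SAut` over `R`. -/
noncomputable def specSAut (t0 : R) (h : PolyAut (Polynomial R) n)
    (hh : h ∈ SAutGrp (Polynomial R) n) : ↥(SAutGrp R n) :=
  ⟨specAut t0 h, specAut_mem_SAutGrp h hh t0⟩

/-- A subgroup `N` of `SAut_k(𝔸ⁿ)` is closed under specialisation if for every
automorphism `h` over `k[t]` of Jacobian `1` all of whose specialisations at
`t₀ ≠ 0` lie in `N`, the specialisation at `0` also lies in `N`. Every subgroup
that is closed in the ind-topology has this property. -/
def ClosedUnderSpec {R : Type*} [CommRing R] {n : ℕ} (N : Subgroup ↥(SAutGrp R n)) : Prop :=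
  ∀ (h : PolyAut (Polynomial R) n) (hh : h ∈ SAutGrp (Polynomial R) n),
    (∀ t0 : R, t0 ≠ 0 → specSAut t0 h hh ∈ N) → specSAut 0 h hh ∈ N

/-- A subgroup `N` of `Aut_k(𝔸ⁿ)` is closed under specialisation if for every
automorphism `h` over `k[t]` all of whose specialisations at `t₀ ≠ 0` lie in `N`,
the specialisation at `0` also lies in `N`. -/
def ClosedUnderSpecAut {R : Type*} [CommRing R] {n : ℕ} (N : Subgroup (PolyAut R n)) : Prop :=
  ∀ h : PolyAut (Polynomial R) n,
    (∀ t0 : R, t0 ≠ 0 → specAut t0 h ∈ N) → specAut 0 h ∈ N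

end Map

/-!
Since `N` is normal and contains the translations, it contains the commutator of a
translation by `c` with an elementary automorphism `x_i ↦ x_i + P` (`P` free of `x_i`), which
is the elementary automorphism `x_i ↦ x_i + (P(x + c) - P(x))`. Taking for `P` the polynomial
`x_j x_l` in a third variable, `x_j²` in characteristic `≠ 2`, or a combination of `x_j³` and
`t x_j³` for some `t ∉ {0, 1}` otherwise, these differences produce all shears
`x_i ↦ x_i + b x_j`, that is, all transvections, which generate `SL_n(k)`. All three
constructions fail exactly for `k = 𝔽₂`, `n = 2`. There `SAut` permutes the four points of
`𝔽₂²`; translations act as even permutations while the shear `(x + y, y)` is a transposition,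
so the kernel of the sign character is a normal subgroup as required.
-/

namespace Matrix

section MulVec

variable {ι R : Type*} [Fintype ι] [DecidableEq ι] [CommRing R]

lemma transvection_mulVec_single_add_single {i j : ι} (hij : i ≠ j) (c x y : R) :
    transvection i j c *ᵥ (Pi.single i x + Pi.single j y) =
      Pi.single i (x + c * y) + Pi.single j y := by
  rw [transvection, add_mulVec, one_mulVec, single_mulVec_eq]
  ext l
  simp only [Pi.add_apply, Pi.smul_apply, Pi.single_apply, hij.symm, smul_eq_mul]
  split_ifs <;> simp_all

lemma transvection_mulVec_single_add_single' {i j : ι} (hij : i ≠ j) (c x y : R) :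
    transvection j i c *ᵥ (Pi.single i x + Pi.single j y) =
      Pi.single i x + Pi.single j (y + c * x) := by
  rw [add_comm, transvection_mulVec_single_add_single hij.symm, add_comm]

lemma transvection_mulVec_single_of_ne {i j l : ι} (hlj : l ≠ j) (c : R) :
    transvection i j c *ᵥ Pi.single l 1 = Pi.single l 1 := by
  rw [transvection, add_mulVec, one_mulVec, single_mulVec_eq, Pi.single_eq_of_ne hlj.symm]
  simp

end MulVec

variable {ι F : Type*} [Fintype ι] [DecidableEq ι] [Field F]

namespace SpecialLinearGroup

lemma diag2n_eq_transvection_prod {i j : ι} (hij : i ≠ j) {a : F} (ha : a ≠ 0) :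
    diag2n hij a ha = transvection hij a * transvection hij.symm (-a⁻¹) * transvection hij a *
      transvection hij (-1) * transvection hij.symm 1 * transvection hij (-1) := by
  have hcoe : ∀ {p q : ι} (hpq : p ≠ q) (c : F),
      (transvection hpq c : Matrix ι ι F) = Matrix.transvection p q c := fun _ _ => rfl
  refine Subtype.ext (ext_of_mulVec_single fun l => ?_)
  simp only [coe_mul, hcoe, diag2n_coe, ← mulVec_mulVec, diagonal_mulVec_single, mul_one]
  obtain rfl | hli := eq_or_ne l i
  · rw [show (Pi.single l 1 : ι → F) = Pi.single l 1 + Pi.single j 0 by simp]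
    simp only [transvection_mulVec_single_add_single hij,
      transvection_mulVec_single_add_single' hij]
    simp [ha]
  obtain rfl | hlj := eq_or_ne l j
  · rw [show (Pi.single l 1 : ι → F) = Pi.single i 0 + Pi.single l 1 by simp]
    simp only [transvection_mulVec_single_add_single hij,
      transvection_mulVec_single_add_single' hij]
    simp [hli, ha]
  simp only [transvection_mulVec_single_of_ne hlj, transvection_mulVec_single_of_ne hli]
  simp [hli, hlj]

lemma eq_top_of_transvection_mem {H : Subgroup (SpecialLinearGroup ι F)}
    (hH : ∀ {i j : ι} (hij : i ≠ j) (c : F), transvection hij c ∈ H) : H = ⊤ := by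
  refine eq_top_iff.2 fun M _ => ?_
  cases subsingleton_or_nontrivial ι
  · exact Subsingleton.elim (1 : SpecialLinearGroup ι F) M ▸ H.one_mem
  refine diagonal_transvection_induction' (· ∈ H) M (fun i j hij c hc => ?_) (fun _ _ => hH)
    (fun _ _ => H.mul_mem)
  rw [diag2n_eq_transvection_prod hij hc]
  refine H.mul_mem (H.mul_mem (H.mul_mem (H.mul_mem (H.mul_mem ?_ ?_) ?_) ?_) ?_) ?_ <;>
    exact hH _ _

end SpecialLinearGroup

end Matrix

lemma Equiv.Perm.sign_prodCongr {α β : Type*} [Fintype α] [DecidableEq α] [Fintype β]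
    [DecidableEq β] (σ : Perm α) (τ : Perm β) :
    sign (σ.prodCongr τ) = sign σ ^ Fintype.card β * sign τ ^ Fintype.card α := by
  have : σ.prodCongr τ = prodCongrLeft (fun _ : β => σ) * prodCongrRight (fun _ : α => τ) :=
    by ext ⟨a, b⟩ <;> rfl
  rw [this, sign_mul, sign_prodCongrLeft, sign_prodCongrRight, Finset.prod_const,
    Finset.prod_const, Finset.card_univ, Finset.card_univ]

namespace MvPolynomial

variable {σ R : Type*} [CommSemiring R]

lemma bind₁_eq_self_of_mem_supported {s : Set σ} {g : σ → MvPolynomial σ R}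
    (hg : ∀ j ∈ s, g j = X j) {p : MvPolynomial σ R} (hp : p ∈ supported R s) :
    bind₁ g p = p := by
  induction hp using Algebra.adjoin_induction with
  | mem x hx =>
    obtain ⟨j, hj, rfl⟩ := hx
    rw [bind₁_X_right, hg j hj]
  | algebraMap r => exact bind₁_C_right g r
  | add x y _ _ hx hy => rw [map_add, hx, hy]
  | mul x y _ _ hx hy => rw [map_mul, hx, hy]

lemma bind₁_mem_supported {s : Set σ} {g : σ → MvPolynomial σ R}
    (hg : ∀ j ∈ s, g j ∈ supported R s) {p : MvPolynomial σ R} (hp : p ∈ supported R s) :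
    bind₁ g p ∈ supported R s := by
  induction hp using Algebra.adjoin_induction with
  | mem x hx =>
    obtain ⟨j, hj, rfl⟩ := hx
    rw [bind₁_X_right]
    exact hg j hj
  | algebraMap r => exact (bind₁_C_right g r).symm ▸ Subalgebra.algebraMap_mem _ r
  | add x y _ _ hx hy => exact (map_add (bind₁ g) x y).symm ▸ add_mem hx hy
  | mul x y _ _ hx hy => exact (map_mul (bind₁ g) x y).symm ▸ mul_mem hx hy

lemma X_mem_supported_of_mem {s : Set σ} {j : σ} (hj : j ∈ s) :
    (X j : MvPolynomial σ R) ∈ supported R s :=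
  Algebra.subset_adjoin ⟨j, hj, rfl⟩

end MvPolynomial

namespace PolyEnd

variable {R : Type*} [CommRing R] {n : ℕ}

@[simp] lemma bind₁_X_right (f : PolyEnd R n) (i : Fin n) : bind₁ f (X i) = f i :=
  MvPolynomial.bind₁_X_right f i

@[simp] lemma bind₁_C_right (f : PolyEnd R n) (r : R) : bind₁ f (C r) = C r :=
  MvPolynomial.bind₁_C_right f r

end PolyEnd

@[simp] lemma translEnd_apply {R : Type*} [CommRing R] {n : ℕ} (c : Fin n → R) (i : Fin n) :
    translEnd c i = X i + C (c i) :=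
  rfl

section Elementary

variable {R : Type*} [CommRing R] {n : ℕ}

lemma bind₁_translEnd_mem_supported {s : Set (Fin n)} (c : Fin n → R)
    {p : MvPolynomial (Fin n) R} (hp : p ∈ supported R s) :
    bind₁ (translEnd c) p ∈ supported R s :=
  bind₁_mem_supported (fun j hj => add_mem (X_mem_supported_of_mem hj)
    (Subalgebra.algebraMap_mem _ (c j))) hp

noncomputable def elemEnd (i : Fin n) (P : MvPolynomial (Fin n) R) : PolyEnd R n :=
  Function.update X i (X i + P)

@[simp] lemma elemEnd_apply_self (i : Fin n) (P : MvPolynomial (Fin n) R) :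
    elemEnd i P i = X i + P :=
  Function.update_self ..

lemma elemEnd_apply_of_ne {i j : Fin n} (h : j ≠ i) (P : MvPolynomial (Fin n) R) :
    elemEnd i P j = X j :=
  Function.update_of_ne h ..

lemma elemEnd_zero (i : Fin n) : elemEnd i (0 : MvPolynomial (Fin n) R) = 1 := by
  rw [elemEnd, add_zero, Function.update_eq_self]
  rfl

lemma elemEnd_mul (i : Fin n) {P : MvPolynomial (Fin n) R} (hP : P ∈ supported R {i}ᶜ)
    (Q : MvPolynomial (Fin n) R) : elemEnd i P * elemEnd i Q = elemEnd i (P + Q) := by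
  have hPQ : bind₁ (elemEnd i Q) P = P :=
    bind₁_eq_self_of_mem_supported (fun j hj => Function.update_of_ne hj _ _) hP
  funext j
  rcases eq_or_ne j i with rfl | hj
  · rw [PolyEnd.mul_apply, elemEnd_apply_self, map_add, PolyEnd.bind₁_X_right, hPQ,
      elemEnd_apply_self, elemEnd_apply_self, add_right_comm, add_assoc]
  · rw [PolyEnd.mul_apply, elemEnd_apply_of_ne hj, PolyEnd.bind₁_X_right, elemEnd_apply_of_ne hj,
      elemEnd_apply_of_ne hj]

lemma jac_elemEnd (i : Fin n) {P : MvPolynomial (Fin n) R} (hP : P ∈ supported R {i}ᶜ) :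
    PolyEnd.jac (elemEnd i P) = 1 := by
  have hPi : pderiv i P = 0 :=
    pderiv_eq_zero_of_notMem_vars fun h => mem_supported.1 hP h rfl
  have hJ : (Matrix.of fun a b => pderiv b (elemEnd i P a)) =
      (1 : Matrix (Fin n) (Fin n) _).updateRow i ((1 : Matrix _ _ _) i + fun b => pderiv b P) := by
    ext a b
    rcases eq_or_ne a i with rfl | ha
    · simp [Matrix.one_apply, pderiv_X, Pi.single_apply]
    · simp [elemEnd_apply_of_ne ha, Matrix.updateRow_ne ha, Matrix.one_apply, pderiv_X,
        Pi.single_apply]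
  have hgrad : ((1 : Matrix (Fin n) (Fin n) (MvPolynomial (Fin n) R)).updateRow i
      fun b => pderiv b P).det = 0 :=
    Matrix.det_eq_zero_of_column_eq_zero i fun a => by
      rcases eq_or_ne a i with rfl | ha
      · simpa using hPi
      · simp [Matrix.updateRow_ne ha, Matrix.one_apply_ne ha]
  rw [PolyEnd.jac, hJ, Matrix.det_updateRow_add, Matrix.updateRow_eq_self, Matrix.det_one, hgrad,
    add_zero]

lemma translEnd_inv_mul_elemEnd_mul_translEnd (c : Fin n → R) (i : Fin n)
    (P : MvPolynomial (Fin n) R) :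
    translEnd (-c) * elemEnd i P * translEnd c = elemEnd i (bind₁ (translEnd c) P) := by
  funext j
  rcases eq_or_ne j i with rfl | hj
  · simp only [PolyEnd.mul_apply, translEnd_apply, map_add, PolyEnd.bind₁_X_right,
      PolyEnd.bind₁_C_right, elemEnd_apply_self, Pi.neg_apply, map_neg]
    ring
  · simp [elemEnd_apply_of_ne hj]

noncomputable def elem (i : Fin n) (P : MvPolynomial (Fin n) R) (hP : P ∈ supported R {i}ᶜ) :
    SAutGrp R n :=
  ⟨⟨elemEnd i P, elemEnd i (-P), by rw [elemEnd_mul i hP, add_neg_cancel, elemEnd_zero],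
    by rw [elemEnd_mul i (neg_mem hP), neg_add_cancel, elemEnd_zero]⟩, jac_elemEnd i hP⟩

variable {i : Fin n} {P Q : MvPolynomial (Fin n) R}

lemma elem_mul (hP : P ∈ supported R {i}ᶜ) (hQ : Q ∈ supported R {i}ᶜ) :
    elem i P hP * elem i Q hQ = elem i (P + Q) (add_mem hP hQ) :=
  Subtype.ext (Units.ext (elemEnd_mul i hP Q))

lemma elem_zero : elem i (0 : MvPolynomial (Fin n) R) (zero_mem _) = 1 :=
  Subtype.ext (Units.ext (elemEnd_zero i))

lemma elem_inv (hP : P ∈ supported R {i}ᶜ) : (elem i P hP)⁻¹ = elem i (-P) (neg_mem hP) :=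
  inv_eq_of_mul_eq_one_right (by simp only [elem_mul, add_neg_cancel, elem_zero])

lemma elem_C (r : R) :
    elem i (C r) (Subalgebra.algebraMap_mem _ r) = translS (Pi.single i r) := by
  refine Subtype.ext (Units.ext ?_)
  change elemEnd i (C r) = translEnd (Pi.single i r)
  funext j
  rcases eq_or_ne j i with rfl | hj
  · simp
  · simp [elemEnd_apply_of_ne hj, hj]

lemma translS_inv_mul_elem_mul_translS (c : Fin n → R) (hP : P ∈ supported R {i}ᶜ) :
    (translS c)⁻¹ * elem i P hP * translS c =
      elem i (bind₁ (translEnd c) P) (bind₁_translEnd_mem_supported c hP) :=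
  Subtype.ext (Units.ext (translEnd_inv_mul_elemEnd_mul_translEnd c i P))

end Elementary

section ElemShifts

variable {R : Type*} [CommRing R] {n : ℕ}

def elemShifts (N : Subgroup (SAutGrp R n)) (i : Fin n) :
    AddSubgroup (MvPolynomial (Fin n) R) where
  carrier := {P | ∃ hP : P ∈ supported R {i}ᶜ, elem i P hP ∈ N}
  zero_mem' := ⟨zero_mem _, (elem_zero (R := R) (i := i)) ▸ N.one_mem⟩
  add_mem' := fun ⟨hP, h⟩ ⟨hQ, h'⟩ => ⟨add_mem hP hQ, elem_mul hP hQ ▸ N.mul_mem h h'⟩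
  neg_mem' := fun ⟨hP, h⟩ => ⟨neg_mem hP, elem_inv hP ▸ N.inv_mem h⟩

variable {N : Subgroup (SAutGrp R n)} {i j : Fin n}

lemma C_mem_elemShifts (htr : ∀ c, translS c ∈ N) (r : R) : C r ∈ elemShifts N i :=
  ⟨_, elem_C r ▸ htr _⟩

lemma bind₁_translEnd_sub_mem_elemShifts (hN : N.Normal) (htr : ∀ c, translS c ∈ N)
    {P : MvPolynomial (Fin n) R} (hP : P ∈ supported R {i}ᶜ) (c : Fin n → R) :
    bind₁ (translEnd c) P - P ∈ elemShifts N i := by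
  have hmem : (translS c)⁻¹ * (elem i P hP * translS c * (elem i P hP)⁻¹) ∈ N :=
    N.mul_mem (N.inv_mem (htr c)) (hN.conj_mem _ (htr c) _)
  rw [← mul_assoc, ← mul_assoc, translS_inv_mul_elem_mul_translS, elem_inv, elem_mul] at hmem
  rw [sub_eq_add_neg]
  exact ⟨_, hmem⟩

lemma C_mul_X_mem_elemShifts_of_ne (hN : N.Normal) (htr : ∀ c, translS c ∈ N) (hj : j ≠ i)
    {l : Fin n} (hl : l ≠ i) (hlj : l ≠ j) (a : R) :
    C a * X j ∈ elemShifts N i := by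
  have hdiff : C a * X j =
      bind₁ (translEnd (Pi.single l (1 : R))) (C a * X j * X l) - C a * X j * X l := by
    simp only [map_mul, PolyEnd.bind₁_C_right, PolyEnd.bind₁_X_right, translEnd_apply,
      Pi.single_eq_of_ne hlj.symm, Pi.single_eq_same, C_0, C_1, add_zero]
    ring
  rw [hdiff]
  exact bind₁_translEnd_sub_mem_elemShifts hN htr (mul_mem (mul_mem
    (Subalgebra.algebraMap_mem _ a) (X_mem_supported_of_mem hj)) (X_mem_supported_of_mem hl)) _

lemma C_two_mul_mul_X_mem_elemShifts (hN : N.Normal) (htr : ∀ c, translS c ∈ N) (hj : j ≠ i)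
    (a : R) : C (2 * a) * X j ∈ elemShifts N i := by
  have hdiff : C (2 * a) * X j + C a =
      bind₁ (translEnd (Pi.single j 1)) (C a * X j ^ 2) - C a * X j ^ 2 := by
    simp only [map_mul, map_pow, PolyEnd.bind₁_C_right, PolyEnd.bind₁_X_right, translEnd_apply,
      Pi.single_eq_same, C_1, map_ofNat C]
    ring
  refine (add_mem_cancel_right (C_mem_elemShifts htr a)).1 ?_
  rw [hdiff]
  exact bind₁_translEnd_sub_mem_elemShifts hN htr (mul_mem
    (Subalgebra.algebraMap_mem _ a) (pow_mem (X_mem_supported_of_mem hj) 2)) _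

lemma C_three_mul_mul_X_mem_elemShifts (hN : N.Normal) (htr : ∀ c, translS c ∈ N) (hj : j ≠ i)
    (t a : R) :
    C (3 * t * (t - 1) * a) * X j ∈ elemShifts N i := by
  have hX3 : ∀ b : R, C b * X j ^ 3 ∈ supported R {i}ᶜ := fun b =>
    mul_mem (Subalgebra.algebraMap_mem _ b) (pow_mem (X_mem_supported_of_mem hj) 3)
  have hdiff : C (3 * t * (t - 1) * a) * X j + C (a * (t ^ 3 - t)) =
      (bind₁ (translEnd (Pi.single j t)) (C a * X j ^ 3) - C a * X j ^ 3) -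
        (bind₁ (translEnd (Pi.single j 1)) (C (a * t) * X j ^ 3) - C (a * t) * X j ^ 3) := by
    simp only [map_mul, map_pow, PolyEnd.bind₁_C_right, PolyEnd.bind₁_X_right, translEnd_apply,
      Pi.single_eq_same, C_1, map_sub, map_ofNat C]
    ring
  refine (add_mem_cancel_right (C_mem_elemShifts htr (a * (t ^ 3 - t)))).1 ?_
  rw [hdiff]
  exact sub_mem (bind₁_translEnd_sub_mem_elemShifts hN htr (hX3 a) _)
    (bind₁_translEnd_sub_mem_elemShifts hN htr (hX3 (a * t)) _)

end ElemShifts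

lemma exists_ne_zero_ne_one_of_card_ne_two {M : Type*} [MulZeroOneClass M] [Nontrivial M]
    (hM : Nat.card M ≠ 2) : ∃ t : M, t ≠ 0 ∧ t ≠ 1 := by
  by_contra! h
  refine hM (Nat.card_eq_two_iff.2 ⟨0, 1, zero_ne_one, Set.eq_univ_of_forall fun x => ?_⟩)
  by_cases hx : x = 0 <;> simp [hx, h x]

section Field

variable {k : Type*} [Field k] {n : ℕ}

lemma C_mul_X_mem_elemShifts {N : Subgroup (SAutGrp k n)} (hN : N.Normal)
    (htr : ∀ c, translS c ∈ N) (hexc : ¬(Nat.card k = 2 ∧ n = 2)) {i j : Fin n}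
    (hj : j ≠ i) (b : k) : C b * X j ∈ elemShifts N i := by
  rcases eq_or_ne n 2 with rfl | hn
  · by_cases h2 : (2 : k) = 0
    · obtain ⟨t, ht0, ht1⟩ := exists_ne_zero_ne_one_of_card_ne_two fun hk => hexc ⟨hk, rfl⟩
      have h3 : (3 : k) * t * (t - 1) ≠ 0 := by
        have : (3 : k) = 1 := by linear_combination h2
        simp [this, ht0, sub_ne_zero.2 ht1]
      simpa [mul_div_cancel₀ _ h3] using
        C_three_mul_mul_X_mem_elemShifts hN htr hj t (b / (3 * t * (t - 1)))
    · simpa [mul_div_cancel₀ _ h2] using C_two_mul_mul_X_mem_elemShifts hN htr hj (b / 2)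
  · have : j.val ≠ i.val := Fin.val_injective.ne hj
    obtain ⟨l, hli, hlj⟩ := Fin.exists_ne_and_ne_of_two_lt i j (by omega)
    exact C_mul_X_mem_elemShifts_of_ne hN htr hj hli hlj b

end Field

section Linear

variable {R : Type*} [CommRing R] {n : ℕ}

lemma linEnd_apply (M : Matrix (Fin n) (Fin n) R) (i : Fin n) :
    linEnd M i = ∑ j, C (M i j) * X j :=
  rfl

lemma linEnd_one : linEnd (1 : Matrix (Fin n) (Fin n) R) = 1 := by
  funext i
  simp [linEnd_apply, Matrix.one_apply]

lemma linEnd_mul (M M' : Matrix (Fin n) (Fin n) R) : linEnd M * linEnd M' = linEnd (M * M') := by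
  funext i
  simp only [PolyEnd.mul_apply, linEnd_apply, map_sum, map_mul, PolyEnd.bind₁_C_right,
    PolyEnd.bind₁_X_right, Matrix.mul_apply, Finset.mul_sum, Finset.sum_mul, mul_assoc]
  exact Finset.sum_comm

lemma jac_linEnd (M : Matrix (Fin n) (Fin n) R) : PolyEnd.jac (linEnd M) = C M.det := by
  rw [PolyEnd.jac, RingHom.map_det]
  congr 1
  ext i j
  simp [linEnd_apply, pderiv_X, Pi.single_apply]

noncomputable def linEndHom : Matrix (Fin n) (Fin n) R →* PolyEnd R n where
  toFun := linEnd
  map_one' := linEnd_one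
  map_mul' M M' := (linEnd_mul M M').symm

noncomputable def linSL : Matrix.SpecialLinearGroup (Fin n) R →* SAutGrp R n :=
  ((Units.map linEndHom).comp Matrix.SpecialLinearGroup.toGL).codRestrict _ fun M => by
    change PolyEnd.jac (linEnd (M : Matrix (Fin n) (Fin n) R)) = 1
    rw [jac_linEnd, M.2, map_one]

lemma memSL_linSL (M : Matrix.SpecialLinearGroup (Fin n) R) : MemSL (linSL M : PolyAut R n) :=
  ⟨M, M.2, rfl⟩

lemma exists_linSL_eq_of_memSL {f : SAutGrp R n} (hf : MemSL (f : PolyAut R n)) :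
    ∃ M, linSL M = f :=
  let ⟨M, hdet, hM⟩ := hf
  ⟨⟨M, hdet⟩, Subtype.ext (Units.ext hM.symm)⟩

lemma linSL_transvection {i j : Fin n} (hij : i ≠ j) (c : R) :
    linSL (Matrix.SpecialLinearGroup.transvection hij c) =
      elem i (C c * X j) (mul_mem (Subalgebra.algebraMap_mem _ c)
        (X_mem_supported_of_mem hij.symm)) := by
  refine Subtype.ext (Units.ext (funext fun p => ?_))
  change linEnd (Matrix.transvection i j c) p = elemEnd i (C c * X j) p
  rcases eq_or_ne p i with rfl | hp
  · simp [linEnd_apply, Matrix.transvection, Matrix.one_apply, Matrix.single_apply, add_mul,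
      Finset.sum_add_distrib, apply_ite C]
  · simp [linEnd_apply, Matrix.transvection, Matrix.one_apply, hp.symm, elemEnd_apply_of_ne hp]

end Linear

lemma memSL_mem_of_translS_mem {k : Type*} [Field k] {n : ℕ} {N : Subgroup (SAutGrp k n)}
    (hN : N.Normal) (htr : ∀ c, translS c ∈ N) (hexc : ¬(Nat.card k = 2 ∧ n = 2))
    {f : SAutGrp k n} (hf : MemSL (f : PolyAut k n)) : f ∈ N := by
  have htop : N.comap linSL = ⊤ :=
    Matrix.SpecialLinearGroup.eq_top_of_transvection_mem fun hij c => by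
      obtain ⟨_, hmem⟩ := C_mul_X_mem_elemShifts hN htr hexc hij.symm c
      rwa [Subgroup.mem_comap, linSL_transvection]
  obtain ⟨M, rfl⟩ := exists_linSL_eq_of_memSL hf
  exact Subgroup.mem_comap.1 (htop ▸ Subgroup.mem_top M)

section PointAction

variable {R : Type*} [CommRing R] {n : ℕ}

noncomputable def evalEnd : PolyEnd R n →* Function.End (Fin n → R) where
  toFun f v i := eval v (f i)
  map_one' := by
    funext v i
    exact eval_X (f := v) (n := i)
  map_mul' f g := by
    funext v i
    exact eval₂Hom_bind₁ (RingHom.id R) v g (f i)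

noncomputable def toPerm : PolyAut R n →* Equiv.Perm (Fin n → R) :=
  Equiv.Perm.equivUnitsEnd.symm.toMonoidHom.comp (Units.map evalEnd)

lemma toPerm_apply (f : PolyAut R n) (v : Fin n → R) (i : Fin n) :
    toPerm f v i = eval v ((f : PolyEnd R n) i) :=
  rfl

lemma toPerm_transl (c : Fin n → R) : toPerm (transl c) = Equiv.addRight c := by
  ext v i
  simp [toPerm_apply]

lemma toPerm_linSL (M : Matrix.SpecialLinearGroup (Fin n) R) (v : Fin n → R) :
    toPerm (linSL M : PolyAut R n) v = Matrix.mulVec M v := by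
  ext i
  simp [toPerm_apply, linSL, linEndHom, linEnd_apply, Matrix.mulVec, dotProduct]

variable [Fintype R] [DecidableEq R]

lemma sign_toPerm_transl (hR : Even (Fintype.card R)) (c : Fin 2 → R) :
    Equiv.Perm.sign (toPerm (transl c)) = 1 := by
  have hprod : (finTwoArrowEquiv R).permCongr (toPerm (transl c)) =
      (Equiv.addRight (c 0)).prodCongr (Equiv.addRight (c 1)) := by
    ext ⟨x, y⟩ <;> simp [toPerm_transl, Equiv.permCongr_apply, Matrix.vecHead, Matrix.vecTail]
  obtain ⟨m, hm⟩ := hR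
  rw [← Equiv.Perm.sign_permCongr (finTwoArrowEquiv R), hprod, Equiv.Perm.sign_prodCongr, hm,
    ← two_mul, pow_mul, pow_mul, Int.units_sq, Int.units_sq, one_pow, one_mul]

lemma sign_toPerm_linSL_transvection (hR : Fintype.card R = 2) :
    Equiv.Perm.sign (toPerm (linSL (Matrix.SpecialLinearGroup.transvection
      (zero_ne_one : (0 : Fin 2) ≠ 1) (1 : R)) : PolyAut R 2)) = -1 := by
  have : Nontrivial R := Fintype.one_lt_card_iff_nontrivial.1 (by omega)
  have hprod : (finTwoArrowEquiv R).permCongr (toPerm (linSL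
      (Matrix.SpecialLinearGroup.transvection (zero_ne_one : (0 : Fin 2) ≠ 1) (1 : R)) :
        PolyAut R 2)) = Equiv.prodCongrLeft fun y => Equiv.addRight y := by
    ext ⟨x, y⟩ <;>
      simp [toPerm_linSL, Equiv.permCongr_apply, Matrix.SpecialLinearGroup.transvection_coe]
  have huniv : (Finset.univ : Finset R) = {0, 1} :=
    (Finset.eq_univ_of_card _ (by rw [Finset.card_pair zero_ne_one, hR])).symm
  have h2 : (1 : R) + 1 = 0 := by
    simpa [hR, one_add_one_eq_two] using Nat.cast_card_eq_zero R
  have hswap : Equiv.addRight (1 : R) = Equiv.swap 0 1 := by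
    ext x
    have hx : x ∈ ({0, 1} : Finset R) := huniv ▸ Finset.mem_univ x
    rw [Finset.mem_insert, Finset.mem_singleton] at hx
    rcases hx with rfl | rfl <;> simp [h2]
  rw [← Equiv.Perm.sign_permCongr (finTwoArrowEquiv R), hprod, Equiv.Perm.sign_prodCongrLeft,
    huniv, Finset.prod_pair zero_ne_one, hswap, Equiv.Perm.sign_swap zero_ne_one]
  simp

end PointAction

lemma exists_normal_translS_mem_not_memSL {R : Type*} [CommRing R] (hR : Nat.card R = 2) :
    ∃ N : Subgroup (SAutGrp R 2), N.Normal ∧ (∀ c, translS c ∈ N) ∧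
      ¬∀ f : SAutGrp R 2, MemSL (f : PolyAut R 2) → f ∈ N := by
  classical
  have : Finite R := Nat.finite_of_card_ne_zero (by omega)
  have : Fintype R := Fintype.ofFinite R
  have hR' : Fintype.card R = 2 := Nat.card_eq_fintype_card (α := R) ▸ hR
  let χ := Equiv.Perm.sign.comp (toPerm.comp (SAutGrp R 2).subtype)
  refine ⟨χ.ker, χ.normal_ker, fun c => sign_toPerm_transl (hR' ▸ even_two) c, fun h => ?_⟩
  have hker := h _ (memSL_linSL (Matrix.SpecialLinearGroup.transvection zero_ne_one 1))
  exact absurd ((MonoidHom.mem_ker.1 hker).symm.trans (sign_toPerm_linSL_transvection hR'))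
    (by decide)

theorem exists_normal_translations_not_SL_iff_general {k : Type*} [Field k] {n : ℕ} :
    (∃ N : Subgroup ↥(SAutGrp k n), N.Normal ∧ (∀ c : Fin n → k, translS c ∈ N) ∧
      ¬(∀ f : ↥(SAutGrp k n), MemSL (f : PolyAut k n) → f ∈ N)) ↔
    (Nat.card k = 2 ∧ n = 2) := by
  constructor
  · rintro ⟨N, hN, htr, hSL⟩
    by_contra hexc
    exact hSL fun f => memSL_mem_of_translS_mem hN htr hexc
  · rintro ⟨hk, rfl⟩
    exact exists_normal_translS_mem_not_memSL hk

/-- **Proposition.**  Let `k` be a field and `n ≥ 1`.  There exists a normal subgroup of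
`SAut_k(𝔸ⁿ)` containing all translations but not containing `SL_n(k)` if and only if
`|k| = 2` and `n = 2`. -/
theorem exists_normal_translations_not_SL_iff {k : Type*} [Field k] {n : ℕ} (hn : 1 ≤ n) :
    (∃ N : Subgroup ↥(SAutGrp k n), N.Normal ∧ (∀ c : Fin n → k, translS c ∈ N) ∧
      ¬(∀ f : ↥(SAutGrp k n), MemSL (f : PolyAut k n) → f ∈ N)) ↔
    (Nat.card k = 2 ∧ n = 2) :=
  exists_normal_translations_not_SL_iff_general
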